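/- In the breadth-first construction of a tree from particle positions and weights, let t(h) be the number of vertices at height ≤ h−1 and define the excursion F^exc(u) = F(y(1) + u mod 1) − F(y(1)−). Then for every h ≥ 1: (i) y(t(h)+1) − y(1) mod 1 = Σ_{v : ht(v) ≤ h−1} p_v, and (ii) F^exc(y(t(h)+1) − y(1) mod 1) = Σ_{v : ht(v) = h} p_v. That is, the excursion function evaluated at the cumulative weight of the first h−1 generations equals the total weight of generation h. -/

import Mathlib

/-!
Write `y m` for the weight of the first `m` vertices in cyclic order from the root and
`a i = fract (x i - x v₀)` for positions measured from the root. Re-rooting the circle changes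
`F(u−)` only by a constant, so the minimality of `F` at the root says that every vertex `j ≥ 1`
lies strictly left of `y j`. As the parent of `j` is the vertex `k` with `y k < a j < y (k+1)`,
parents precede their children and the parent map is monotone; hence heights increase along
the order, and the vertices of height `≤ h-1` are exactly the first `t h` ones, which is (i).
A vertex lies left of `y (t h)` iff its parent is among those first `t h`, i.e. iff its height
is `≤ h`; subtracting (i) gives (ii).
-/

open Finset

/-- The paper's `y (m + 1) - y 1`: the weight of the first `m` vertices of the order. -/
def prefixSum {n : ℕ} (q : Fin n → ℝ) (m : ℕ) : ℝ :=
  ∑ k ∈ univ.filter (fun k : Fin n => (k : ℕ) < m), q k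

section
variable {n : ℕ} {q : Fin n → ℝ}

theorem prefixSum_mono (hq : ∀ k, 0 ≤ q k) : Monotone (prefixSum q) := fun _ _ hm =>
  sum_le_sum_of_subset_of_nonneg (fun k hk => by
    simp only [mem_filter, mem_univ, true_and] at hk ⊢; omega)
    fun k _ _ => hq k

theorem prefixSum_val (k : Fin n) : prefixSum q k = ∑ l ∈ Iio k, q l := by
  unfold prefixSum; congr 1; ext l
  simp only [mem_filter, mem_univ, true_and, mem_Iio, Fin.lt_def]

theorem prefixSum_val_add_one (k : Fin n) : prefixSum q (k + 1) = ∑ l ∈ Iic k, q l := by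
  unfold prefixSum; congr 1; ext l
  simp only [mem_filter, mem_univ, true_and, mem_Iic, Fin.le_def]; omega

theorem Monotone.le_iff_lt_card_filter {β : Type*} [Preorder β] [DecidableLE β]
    {f : Fin n → β} (hf : Monotone f) (c : β) (j : Fin n) :
    f j ≤ c ↔ (j : ℕ) < #{l | f l ≤ c} := by
  constructor
  · intro hj
    have := card_le_card fun l (hl : l ∈ Iic j) =>
      mem_filter.2 ⟨mem_univ l, (hf (mem_Iic.1 hl)).trans hj⟩
    rw [Fin.card_Iic] at this
    omega
  · intro hlt
    by_contra hj
    have := card_le_card fun l (hl : l ∈ ({l | f l ≤ c} : Finset (Fin n))) =>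
      mem_Iio.2 (lt_of_not_ge fun hjl => hj ((hf hjl).trans (mem_filter.1 hl).2))
    rw [Fin.card_Iio] at this
    omega

theorem Monotone.prefixSum_card_filter_le {β : Type*} [Preorder β] [DecidableLE β]
    {f : Fin n → β} (hf : Monotone f) (c : β) :
    prefixSum q #{l | f l ≤ c} = ∑ j with f j ≤ c, q j := by
  unfold prefixSum
  rw [filter_congr fun j _ => (hf.le_iff_lt_card_filter c j).symm]

end

theorem sum_filter_le_add_one {ι M : Type*} [DecidableEq ι] [AddCommMonoid M] (s : Finset ι)
    (f : ι → ℕ) (g : ι → M) (c : ℕ) :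
    ∑ i ∈ s with f i ≤ c + 1, g i
      = ∑ i ∈ s with f i ≤ c, g i + ∑ i ∈ s with f i = c + 1, g i := by
  rw [← sum_union (disjoint_filter.2 fun _ _ h₁ h₂ => by omega), ← filter_or]
  exact sum_congr (filter_congr fun _ _ => by omega) fun _ _ => rfl

theorem Function.Bijective.sum_filter_comp {ι κ M : Type*} [Fintype ι] [Fintype κ]
    [AddCommMonoid M] {v : ι → κ} (hv : Function.Bijective v) (P : κ → Prop) [DecidablePred P]
    (g : κ → M) : ∑ j with P (v j), g (v j) = ∑ w with P w, g w := by
  simp only [sum_filter]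
  exact hv.sum_comp fun w => if P w then g w else 0

theorem Function.Bijective.card_filter_comp {ι κ : Type*} [Fintype ι] [Fintype κ]
    {v : ι → κ} (hv : Function.Bijective v) (P : κ → Prop) [DecidablePred P] :
    #{j | P (v j)} = #{w | P w} := by
  simpa only [card_eq_sum_ones] using hv.sum_filter_comp P fun _ => 1

theorem fract_sub_eq_of_mem_Ico {a c : ℝ} (ha : a ∈ Set.Ico 0 1) (hc : c ∈ Set.Ico 0 1) :
    Int.fract (a - c) = a - c + if a < c then 1 else 0 := by
  obtain ⟨ha₀, ha₁⟩ := ha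
  obtain ⟨hc₀, hc₁⟩ := hc
  split_ifs with h
  · rw [← Int.fract_add_one, Int.fract_eq_self.2 ⟨by linarith, by linarith⟩]
  · rw [Int.fract_eq_self.2 ⟨by linarith, by linarith⟩, add_zero]

theorem ite_fract_sub_lt_add_ite {a b c : ℝ} (ha : a ∈ Set.Ico 0 1) (hb : b ∈ Set.Ico 0 1)
    (hc : c ∈ Set.Ico 0 1) (r : ℝ) :
    (if Int.fract (a - c) < Int.fract (b - c) then r else 0) + (if a < c then r else 0)
      = (if a < b then r else 0) + (if b < c then r else 0) := by
  rw [fract_sub_eq_of_mem_Ico ha hc, fract_sub_eq_of_mem_Ico hb hc]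
  obtain ⟨ha₀, ha₁⟩ := ha
  obtain ⟨hb₀, hb₁⟩ := hb
  split_ifs <;> linarith

/-- The left limit `F(u−)`. -/
noncomputable def leftF {ι : Type*} [Fintype ι] (x p : ι → ℝ) (u : ℝ) : ℝ :=
  -u + ∑ i, if x i < u then p i else 0

/-- Re-rooting the circle at `c`. -/
theorem sum_fract_sub_lt_sub_fract_sub {ι : Type*} [Fintype ι] {x p : ι → ℝ}
    (hx : ∀ i, x i ∈ Set.Ico 0 1) (hsum : ∑ i, p i = 1) {u c : ℝ} (hu : u ∈ Set.Ico 0 1)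
    (hc : c ∈ Set.Ico 0 1) :
    (∑ i, if Int.fract (x i - c) < Int.fract (u - c) then p i else 0) - Int.fract (u - c)
      = leftF x p u - leftF x p c := by
  have hterms := sum_congr rfl fun i (_ : i ∈ univ) => ite_fract_sub_lt_add_ite (hx i) hu hc (p i)
  simp only [sum_add_distrib] at hterms
  have hfract := fract_sub_eq_of_mem_Ico hu hc
  unfold leftF
  by_cases h : u < c <;> simp only [h, if_true, if_false, hsum, sum_const_zero] at hterms hfract <;>
    linarith

/-- Vertices indexed by their rank in the cyclic order from the root `0`, with weights `q`,
positions `a` measured from the root, and heights `H`; the parent of `j ≥ 1` is the `k`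
whose interval `(prefixSum q k, prefixSum q (k + 1))` contains `a j`. -/
structure IsBreadthFirstOrder {n : ℕ} (hn : 0 < n) (q a : Fin n → ℝ) (H : Fin n → ℕ) : Prop where
  weight_nonneg : ∀ k, 0 ≤ q k
  position_mono : Monotone a
  position_root : a ⟨0, hn⟩ = 0
  height_root : H ⟨0, hn⟩ = 0
  position_lt_prefixSum : ∀ j : Fin n, 0 < (j : ℕ) → a j < prefixSum q j
  exists_parent : ∀ j : Fin n, 0 < (j : ℕ) → ∃ k : Fin n,
    H j = H k + 1 ∧ prefixSum q k < a j ∧ a j < prefixSum q (k + 1)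

namespace IsBreadthFirstOrder

variable {n : ℕ} {hn : 0 < n} {q a : Fin n → ℝ} {H : Fin n → ℕ}

theorem height_mono (hB : IsBreadthFirstOrder hn q a H) : Monotone H := by
  have hy := prefixSum_mono hB.weight_nonneg
  intro j₁ j₂ hle
  induction j₂ using WellFoundedLT.induction generalizing j₁ with
  | ind j₂ ih =>
    rcases Nat.eq_zero_or_pos j₁ with h₀ | hj₁
    · rw [show j₁ = ⟨0, hn⟩ from Fin.ext h₀, hB.height_root]
      exact Nat.zero_le _
    have hj₂ : 0 < (j₂ : ℕ) := hj₁.trans_le hle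
    obtain ⟨k₁, hH₁, hlo₁, -⟩ := hB.exists_parent j₁ hj₁
    obtain ⟨k₂, hH₂, hlo₂, hhi₂⟩ := hB.exists_parent j₂ hj₂
    have hk₂ : k₂ < j₂ := hy.reflect_lt (hlo₂.trans (hB.position_lt_prefixSum j₂ hj₂))
    have hk : k₁ ≤ k₂ := Nat.lt_succ_iff.1 <|
      hy.reflect_lt (hlo₁.trans ((hB.position_mono hle).trans_lt hhi₂))
    rw [hH₁, hH₂]
    exact Nat.succ_le_succ (ih k₂ hk₂ hk)

theorem le_prefixSum_card_iff (hB : IsBreadthFirstOrder hn q a H) {c : ℕ} {j : Fin n}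
    (hjump : a j ≠ prefixSum q #{l | H l ≤ c}) :
    a j ≤ prefixSum q #{l | H l ≤ c} ↔ H j ≤ c + 1 := by
  have hy := prefixSum_mono hB.weight_nonneg
  have hT := hB.height_mono.le_iff_lt_card_filter c
  rcases Nat.eq_zero_or_pos j with h₀ | hj
  · obtain rfl : j = ⟨0, hn⟩ := Fin.ext h₀
    rw [hB.position_root, hB.height_root]
    exact iff_of_true (sum_nonneg fun k _ => hB.weight_nonneg k) (Nat.zero_le _)
  obtain ⟨k, hH, hlo, hhi⟩ := hB.exists_parent j hj
  rw [hH, Nat.add_le_add_iff_right, hT]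
  constructor
  · intro hle
    exact hy.reflect_lt (hlo.trans (lt_of_le_of_ne hle hjump))
  · intro hk
    exact (hhi.trans_le (hy hk)).le

theorem sum_le_prefixSum_card_sub (hB : IsBreadthFirstOrder hn q a H) (c : ℕ)
    (hjump : ∀ m, 1 ≤ m → m ≤ n → ∀ j, a j ≠ prefixSum q m) :
    ∑ j with a j ≤ prefixSum q #{l | H l ≤ c}, q j - prefixSum q #{l | H l ≤ c}
      = ∑ j with H j = c + 1, q j := by
  have hT₁ : 1 ≤ #{l | H l ≤ c} :=
    card_pos.2 ⟨⟨0, hn⟩, mem_filter.2 ⟨mem_univ _, by rw [hB.height_root]; exact Nat.zero_le c⟩⟩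
  have hTn : #{l | H l ≤ c} ≤ n := (card_filter_le _ _).trans (card_fin n).le
  rw [filter_congr fun j _ => hB.le_prefixSum_card_iff (hjump _ hT₁ hTn j),
    sum_filter_le_add_one, hB.height_mono.prefixSum_card_filter_le]
  ring

end IsBreadthFirstOrder

theorem isBreadthFirstOrder_of_isMin_leftF {n : ℕ} (hn : 0 < n) {x p : Fin n → ℝ}
    (hx : ∀ i, x i ∈ Set.Ico 0 1) (hp : ∀ i, 0 < p i) (hsum : ∑ i, p i = 1)
    {v : Fin n → Fin n} (hv : Function.Bijective v)
    (hord : StrictMono fun j : Fin n => Int.fract (x (v j) - x (v ⟨0, hn⟩)))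
    (hmin : ∀ w : Fin n, w ≠ v ⟨0, hn⟩ → leftF x p (x (v ⟨0, hn⟩)) < leftF x p (x w))
    {par : Fin n → Fin n}
    (hpar : ∀ j : Fin n, 0 < (j : ℕ) → ∃ k : Fin n, par (v j) = v k ∧
      Int.fract (x (v j) - x (v ⟨0, hn⟩)) ∈
        Set.Ioo (∑ l ∈ Iio k, p (v l)) (∑ l ∈ Iic k, p (v l)))
    {ht : Fin n → ℕ} (hht0 : ht (v ⟨0, hn⟩) = 0)
    (hhts : ∀ w : Fin n, w ≠ v ⟨0, hn⟩ → ht w = ht (par w) + 1) :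
    IsBreadthFirstOrder hn (fun j => p (v j)) (fun j => Int.fract (x (v j) - x (v ⟨0, hn⟩)))
      (fun j => ht (v j)) := by
  have hne : ∀ j : Fin n, 0 < (j : ℕ) → v j ≠ v ⟨0, hn⟩ := fun j hj =>
    hv.injective.ne (Fin.ne_of_val_ne hj.ne')
  refine ⟨fun k => (hp (v k)).le, hord.monotone, by simp, hht0, fun j hj => ?_, fun j hj => ?_⟩
  · have hshift := sum_fract_sub_lt_sub_fract_sub hx hsum (hx (v j)) (hx (v ⟨0, hn⟩))
    have hleft : (∑ i, if Int.fract (x i - x (v ⟨0, hn⟩)) < Int.fract (x (v j) - x (v ⟨0, hn⟩))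
        then p i else 0) = prefixSum (fun j => p (v j)) j := by
      rw [← hv.sum_comp, prefixSum, sum_filter]
      exact sum_congr rfl fun k _ => by simp only [hord.lt_iff_lt, Fin.lt_def]
    linarith [hmin (v j) (hne j hj)]
  · obtain ⟨k, hk, hlo, hhi⟩ := hpar j hj
    refine ⟨k, by simp only [hhts _ (hne j hj), hk], ?_, ?_⟩
    · rw [prefixSum_val]; exact hlo
    · rw [prefixSum_val_add_one]; exact hhi

open Set

open scoped Classical in
theorem stmt8_general (n : ℕ) (hn : 0 < n) (x p : Fin n → ℝ)
    (hx : ∀ i, x i ∈ Ico (0:ℝ) 1)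
    (hp : ∀ i, 0 < p i) (hsum : ∑ i, p i = 1)
    (v : Fin n → Fin n) (hv : Function.Bijective v)
    (hord : StrictMono fun j : Fin n => Int.fract (x (v j) - x (v ⟨0, hn⟩)))
    (hmin : ∀ w : Fin n, w ≠ v ⟨0, hn⟩ →
      (-(x (v ⟨0, hn⟩)) + ∑ i, if x i < x (v ⟨0, hn⟩) then p i else 0)
        < -(x w) + ∑ i, if x i < x w then p i else 0)
    (par : Fin n → Fin n)
    (hpar : ∀ j : Fin n, 0 < (j : ℕ) → ∃ k : Fin n, par (v j) = v k ∧
      Int.fract (x (v j) - x (v ⟨0, hn⟩)) ∈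
        Ioo (∑ l ∈ Finset.Iio k, p (v l)) (∑ l ∈ Finset.Iic k, p (v l)))
    (ht : Fin n → ℕ)
    (hht0 : ht (v ⟨0, hn⟩) = 0)
    (hhts : ∀ w : Fin n, w ≠ v ⟨0, hn⟩ → ht w = ht (par w) + 1)
    (t : ℕ → ℕ)
    (htdef : ∀ h : ℕ, t h = (Finset.univ.filter fun w : Fin n => ht w ≤ h - 1).card)
    (Fexc : ℝ → ℝ)
    (hFexc : ∀ u : ℝ, Fexc u =
      (∑ i, if Int.fract (x i - x (v ⟨0, hn⟩)) ≤ u then p i else 0) - u)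
    (hnojump : ∀ j : ℕ, 1 ≤ j → j ≤ n → ∀ i : Fin n,
      Int.fract (x i - x (v ⟨0, hn⟩)) ≠
        ∑ k ∈ Finset.univ.filter (fun k : Fin n => (k : ℕ) < j), p (v k)) :
    ∀ h : ℕ, 1 ≤ h →
      (∑ k ∈ Finset.univ.filter (fun k : Fin n => (k : ℕ) < t h), p (v k))
        = (∑ w ∈ Finset.univ.filter (fun w : Fin n => ht w ≤ h - 1), p w) ∧
      Fexc (∑ w ∈ Finset.univ.filter (fun w : Fin n => ht w ≤ h - 1), p w)
        = ∑ w ∈ Finset.univ.filter (fun w : Fin n => ht w = h), p w := by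
  have hB := isBreadthFirstOrder_of_isMin_leftF hn hx hp hsum hv hord hmin hpar hht0 hhts
  intro h hh
  have ht_card : t h = #{j | ht (v j) ≤ h - 1} := by
    rw [htdef, hv.card_filter_comp fun w => ht w ≤ h - 1]
  have hprefix : prefixSum (fun j => p (v j)) (t h) = ∑ w with ht w ≤ h - 1, p w := by
    rw [ht_card, hB.height_mono.prefixSum_card_filter_le]
    exact hv.sum_filter_comp (fun w => ht w ≤ h - 1) p
  refine ⟨hprefix, ?_⟩
  rw [← hprefix, hFexc, ← hv.sum_comp, ← sum_filter, ht_card,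
    hB.sum_le_prefixSum_card_sub (h - 1) fun m h₁ h₂ j => hnojump m h₁ h₂ (v j),
    Nat.sub_add_cancel hh, hv.sum_filter_comp fun w => ht w = h]

open scoped Classical in
/-- Breadth-first construction: with `t h` the number of vertices of height `≤ h-1`
and `Fexc` the shifted excursion `Fexc u = ∑ᵢ pᵢ 1{x'ᵢ ≤ u} - u` (where
`x'ᵢ = Int.fract (xᵢ - x (v 0))`), for every `h ≥ 1`:
(i) `y (t h) - y 0 = ∑_{k < t h} p (v k)` equals the total weight of the vertices of
height `≤ h-1`, and (ii) `Fexc` evaluated there equals the total weight of the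
vertices of height `h`. -/
theorem stmt8 (n : ℕ) (hn : 0 < n) (x p : Fin n → ℝ)
    (hx : ∀ i, x i ∈ Ico (0:ℝ) 1) (hxinj : Function.Injective x)
    (hp : ∀ i, 0 < p i) (hsum : ∑ i, p i = 1)
    (v : Fin n → Fin n) (hv : Function.Bijective v)
    (hord : StrictMono fun j : Fin n => Int.fract (x (v j) - x (v ⟨0, hn⟩)))
    (hmin : ∀ w : Fin n, w ≠ v ⟨0, hn⟩ →
      (-(x (v ⟨0, hn⟩)) + ∑ i, if x i < x (v ⟨0, hn⟩) then p i else 0)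
        < -(x w) + ∑ i, if x i < x w then p i else 0)
    (par : Fin n → Fin n)
    (hpar : ∀ j : Fin n, 0 < (j : ℕ) → ∃ k : Fin n, par (v j) = v k ∧
      Int.fract (x (v j) - x (v ⟨0, hn⟩)) ∈
        Ioo (∑ l ∈ Finset.Iio k, p (v l)) (∑ l ∈ Finset.Iic k, p (v l)))
    (ht : Fin n → ℕ)
    (hht0 : ht (v ⟨0, hn⟩) = 0)
    (hhts : ∀ w : Fin n, w ≠ v ⟨0, hn⟩ → ht w = ht (par w) + 1)
    (t : ℕ → ℕ)
    (htdef : ∀ h : ℕ, t h = (Finset.univ.filter fun w : Fin n => ht w ≤ h - 1).card)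
    (Fexc : ℝ → ℝ)
    (hFexc : ∀ u : ℝ, Fexc u =
      (∑ i, if Int.fract (x i - x (v ⟨0, hn⟩)) ≤ u then p i else 0) - u)
    (hnojump : ∀ j : ℕ, 1 ≤ j → j ≤ n → ∀ i : Fin n,
      Int.fract (x i - x (v ⟨0, hn⟩)) ≠
        ∑ k ∈ Finset.univ.filter (fun k : Fin n => (k : ℕ) < j), p (v k)) :
    ∀ h : ℕ, 1 ≤ h →
      (∑ k ∈ Finset.univ.filter (fun k : Fin n => (k : ℕ) < t h), p (v k))
        = (∑ w ∈ Finset.univ.filter (fun w : Fin n => ht w ≤ h - 1), p w) ∧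
      Fexc (∑ w ∈ Finset.univ.filter (fun w : Fin n => ht w ≤ h - 1), p w)
        = ∑ w ∈ Finset.univ.filter (fun w : Fin n => ht w = h), p w :=
  stmt8_general n hn x p hx hp hsum v hv hord hmin par hpar ht hht0 hhts t htdef Fexc hFexc hnojump
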